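/- arXiv:2411.14960 — 2 statements merged into one kernel-verified Lean document; each statement's English description precedes it below -/
import Mathlib

section
/- Consider a tower of algebraic extensions 𝔽_p(t) ⊆ E ⊆ 𝐊 ⊆ 𝐋 where E/𝔽_p(t) is finite, 𝐊/E is infinite, and 𝐋 = 𝐊(β_1, …, β_s) for elements β_1, …, β_s ∈ 𝐋. Let α be algebraic over 𝐋 and let z ∈ 𝐋(α). Then there exist fields Ê and L with E ⊆ Ê ⊆ 𝐊, Ê/E finite, L = Ê(β_1, …, β_s) ⊆ 𝐋, such that: [Ê(β_j) : Ê] = [𝐊(β_j) : 𝐊] for all j = 1, …, s; α has the same monic irreducible polynomial over L as over 𝐋; z ∈ L(α); and N_{𝐋(α)/𝐋}(z) = N_{L(α)/L}(z). -/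
noncomputable section

/-- A normalized (surjective onto `ℤ`) discrete valuation on a field `K`, i.e. a
"prime" of a global function field. -/
structure FFPrime (K : Type) [Field K] where
  ord : K → WithTop ℤ
  ord_zero : ord 0 = ⊤
  ord_ne_top : ∀ x : K, x ≠ 0 → ord x ≠ ⊤
  ord_one : ord 1 = 0
  ord_mul : ∀ x y : K, ord (x * y) = ord x + ord y
  ord_add : ∀ x y : K, min (ord x) (ord y) ≤ ord (x + y)
  ord_surj : ∀ n : ℤ, ∃ x : K, ord x = (n : WithTop ℤ)

namespace FFPrime

variable {K L : Type} [Field K] [Field L]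

/-- `w` lies over `v` along `φ`, with ramification index `e`. -/
def LiesOverWith (w : FFPrime L) (v : FFPrime K) (φ : K →+* L) (e : ℕ) : Prop :=
  0 < e ∧ ∀ x : K, w.ord (φ x) = ((e : ℤ) : WithTop ℤ) * v.ord x

/-- `w` lies over `v` along `φ`. -/
def LiesOver (w : FFPrime L) (v : FFPrime K) (φ : K →+* L) : Prop :=
  ∃ e : ℕ, w.LiesOverWith v φ e

open Classical in
/-- The ramification index `e(w/v)`. -/
noncomputable def ramIdx (w : FFPrime L) (v : FFPrime K) (φ : K →+* L) : ℕ :=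
  if h : ∃ e : ℕ, w.LiesOverWith v φ e then h.choose else 0

/-- The residue field of `v` has exactly `n` elements. -/
def HasResidueCard (v : FFPrime K) (n : ℕ) : Prop :=
  ∃ s : Finset K, s.card = n ∧ (∀ x ∈ s, 0 ≤ v.ord x) ∧
    (∀ x ∈ s, ∀ y ∈ s, x ≠ y → ¬ 0 < v.ord (x - y)) ∧
    (∀ z : K, 0 ≤ v.ord z → ∃ x ∈ s, 0 < v.ord (z - x))

open Classical in
/-- The residue (relative) degree `f(w/v)`: the unique `f ≥ 1` with
`#κ_w = (#κ_v) ^ f` (residue fields of global function fields are finite). -/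
noncomputable def resDeg (w : FFPrime L) (v : FFPrime K) : ℕ :=
  if h : ∃ f : ℕ, 0 < f ∧ ∃ m n : ℕ, 1 < m ∧ v.HasResidueCard m ∧
      w.HasResidueCard n ∧ n = m ^ f then h.choose else 0

/-- `v` splits completely in the extension given by `φ`: every prime above it has
ramification index and residue degree `1`. -/
def SplitsCompletely (v : FFPrime K) (φ : K →+* L) : Prop :=
  ∀ w : FFPrime L, w.LiesOver v φ → w.ramIdx v φ = 1 ∧ w.resDeg v = 1

/-- `v` is inert in the finite extension `M/K`: there is a unique prime above it, with
ramification index `1` and residue degree `[M : K]`. -/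
def IsInert (v : FFPrime K) (M : Type) [Field M] [Algebra K M] : Prop :=
  (∃! w : FFPrime M, w.LiesOver v (algebraMap K M)) ∧
    ∀ w : FFPrime M, w.LiesOver v (algebraMap K M) →
      w.ramIdx v (algebraMap K M) = 1 ∧ w.resDeg v = Module.finrank K M

/-- `v` ramifies in the extension given by `φ`: some prime above it has ramification
index `> 1`. -/
def Ramifies (v : FFPrime K) (φ : K →+* L) : Prop :=
  ∃ w : FFPrime L, w.LiesOver v φ ∧ 2 ≤ w.ramIdx v φ

/-- `ord_v z ≡ 0 mod q`. -/
def OrdDvd (v : FFPrime K) (q : ℕ) (z : K) : Prop :=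
  ∃ n : ℤ, v.ord z = (((q : ℤ) * n : ℤ) : WithTop ℤ)

end FFPrime

/-- A nontrivial (rank one) valuation on a possibly infinite algebraic extension of a
global function field, with values in `ℚ ∪ {∞}`. -/
structure FFVal (B : Type) [Field B] where
  ord : B → WithTop ℚ
  ord_zero : ord 0 = ⊤
  ord_ne_top : ∀ x : B, x ≠ 0 → ord x ≠ ⊤
  ord_one : ord 1 = 0
  ord_mul : ∀ x y : B, ord (x * y) = ord x + ord y
  ord_add : ∀ x y : B, min (ord x) (ord y) ≤ ord (x + y)
  nontrivial : ∃ x : B, ord x ≠ 0 ∧ ord x ≠ ⊤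

/-- The valuation `V` of the big field restricts, up to a normalization factor `c`, to
the (normalized discrete) prime `v` of `K` along `φ`; i.e. `v` is the prime of `K`
lying below `V`. -/
def FFVal.RestrictsTo {K B : Type} [Field K] [Field B] (V : FFVal B) (v : FFPrime K)
    (φ : K →+* B) : Prop :=
  ∃ c : ℚ, 0 < c ∧
    ∀ x : K, V.ord (φ x) = ((c : ℚ) : WithTop ℚ) * WithTop.map (fun n : ℤ => (n : ℚ)) (v.ord x)

/-- The algebraic extension `B` of the rational function field `F0 = 𝔽_p(t)` is
`q`-bounded: for every valuation of `B`, the `q`-adic valuations of the ramification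
indices and residue degrees along every finite subextension are bounded. -/
def IsQBounded (q : ℕ) (F0 B : Type) [Field F0] [Field B] [Algebra F0 B] : Prop :=
  ∀ V : FFVal B, ∃ C : ℕ,
    ∀ L : IntermediateField F0 B, FiniteDimensional F0 L →
      ∀ v0 : FFPrime F0, ∀ vL : FFPrime L,
        V.RestrictsTo v0 (algebraMap F0 B) →
        V.RestrictsTo vL L.val.toRingHom →
        padicValNat q (vL.ramIdx v0 (algebraMap F0 L)) ≤ C ∧
        padicValNat q (vL.resDeg v0) ≤ C

/-- The prime `v` of `K` has uniformly `q`-bounded ramification in `B`. -/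
def UnifQBoundedRam (q : ℕ) {K : Type} [Field K] (B : Type) [Field B] [Algebra K B]
    (v : FFPrime K) : Prop :=
  ∃ C : ℕ, ∀ F : IntermediateField K B, FiniteDimensional K F →
    ∀ w : FFPrime F, w.LiesOver v (algebraMap K F) →
      padicValNat q (w.ramIdx v (algebraMap K F)) ≤ C

/-- The prime `v` of `K` has uniformly absolutely bounded ramification in `B`. -/
def UnifAbsBoundedRam {K : Type} [Field K] (B : Type) [Field B] [Algebra K B]
    (v : FFPrime K) : Prop :=
  ∃ C : ℕ, ∀ F : IntermediateField K B, FiniteDimensional K F →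
    ∀ w : FFPrime F, w.LiesOver v (algebraMap K F) →
      w.ramIdx v (algebraMap K F) ≤ C

/-- The prime `v` of `K` has uniformly `q`-bounded relative (residue) degree in `B`. -/
def UnifQBoundedRes (q : ℕ) {K : Type} [Field K] (B : Type) [Field B] [Algebra K B]
    (v : FFPrime K) : Prop :=
  ∃ C : ℕ, ∀ F : IntermediateField K B, FiniteDimensional K F →
    ∀ w : FFPrime F, w.LiesOver v (algebraMap K F) →
      padicValNat q (w.resDeg v) ≤ C

/-- The prime `v` of `K` is uniformly `q`-bounded in `B`. -/
def UniformlyQBoundedAt (q : ℕ) {K : Type} [Field K] (B : Type) [Field B] [Algebra K B]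
    (v : FFPrime K) : Prop :=
  UnifQBoundedRam q B v ∧ UnifQBoundedRes q B v

/-- The integral closure in `B` of the valuation ring `O_v = {x ∈ K : ord_v x ≥ 0}`. -/
def valIntegralClosure {K : Type} [Field K] (v : FFPrime K) (B : Type) [Field B]
    [Algebra K B] : Set B :=
  {x : B | ∃ P : Polynomial K, P.Monic ∧ (∀ n : ℕ, 0 ≤ v.ord (P.coeff n)) ∧
    Polynomial.aeval x P = 0}

/-- The integral closure in `B` of the ring `O_{K,S}` of `S`-integers of `K`. -/
def sIntegralClosure {K : Type} [Field K] (S : Set (FFPrime K)) (B : Type) [Field B]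
    [Algebra K B] : Set B :=
  {x : B | ∃ P : Polynomial K, P.Monic ∧
    (∀ n : ℕ, ∀ v : FFPrime K, v ∉ S → 0 ≤ v.ord (P.coeff n)) ∧
    Polynomial.aeval x P = 0}

/-- Elements of `B` that are units at every prime of `B` lying over a prime of `S`. -/
def unitsAtS {K : Type} [Field K] (S : Set (FFPrime K)) (B : Type) [Field B]
    [Algebra K B] : Set B :=
  {x : B | ∀ V : FFVal B, (∃ v ∈ S, V.RestrictsTo v (algebraMap K B)) → V.ord x = 0}

/-- Elements `x` of `B` with `ord (x - 1) > 0` at every prime of `B` lying over a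
prime of `S`. -/
def onesAtS {K : Type} [Field K] (S : Set (FFPrime K)) (B : Type) [Field B]
    [Algebra K B] : Set B :=
  {x : B | ∀ V : FFVal B, (∃ v ∈ S, V.RestrictsTo v (algebraMap K B)) → 0 < V.ord (x - 1)}

/-- A subset of a commutative ring is first-order definable in the language of rings
`{0, 1, +, ·}` with parameters from the ring. -/
def FODefinable {R : Type} [CommRing R] (X : Set R) : Prop :=
  letI : FirstOrder.Ring.CompatibleRing R := FirstOrder.Ring.compatibleRingOfRing R
  Set.Definable₁ (Set.univ : Set R) FirstOrder.Language.ring X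

/-- A subset of a commutative ring is existentially (diophantine) definable: it is cut
out by a block of existential quantifiers followed by a system of polynomial equations,
with parameters (coefficients) from the ring. -/
def ExistDefinable {R : Type} [CommRing R] (X : Set R) : Prop :=
  ∃ (k m : ℕ) (P : Fin m → MvPolynomial (Fin (k + 1)) R),
    ∀ x : R, x ∈ X ↔ ∃ y : Fin k → R, ∀ i : Fin m,
      MvPolynomial.eval (Fin.cons x y) (P i) = 0

/-- Solvability of the norm equation `N(y) = b·x^q + b^q` over (every realization of)
the tower `L₂(a^{1/q})/L₂`, where `L₁ = F((1+(b x^q+b^q)⁻¹)^{1/q})` and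
`L₂ = L₁((1+(a+a⁻¹)b⁻¹)^{1/q})`. -/
def NormTower2Solvable (q : ℕ) (F : Type) [Field F] (a b x : F) : Prop :=
  ∀ (M1 : Type) [Field M1] [Algebra F M1] (α1 : M1),
    α1 ^ q = algebraMap F M1 (1 + (b * x ^ q + b ^ q)⁻¹) →
    IntermediateField.adjoin F {α1} = ⊤ →
    ∀ (M2 : Type) [Field M2] [Algebra M1 M2] (α2 : M2),
      α2 ^ q = algebraMap M1 M2 (algebraMap F M1 (1 + (a + a⁻¹) * b⁻¹)) →
      IntermediateField.adjoin M1 {α2} = ⊤ →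
      ∀ (M3 : Type) [Field M3] [Algebra M2 M3] (α3 : M3),
        α3 ^ q = algebraMap M2 M3 (algebraMap M1 M2 (algebraMap F M1 a)) →
        IntermediateField.adjoin M2 {α3} = ⊤ →
        ∃ y : M3, Algebra.norm M2 y = algebraMap M1 M2 (algebraMap F M1 (b * x ^ q + b ^ q))

/-- Solvability of the norm equation `N(y) = b·x^q + b^q` over (every realization of)
the tower `L₄(a^{1/q})/L₄`, where `L₁ = F((1+(b x^q+b^q)⁻¹)^{1/q})`,
`L₃ = L₁((1+x⁻¹)^{1/q})` and `L₄ = L₃((1+(a+a⁻¹)x⁻¹)^{1/q})`. -/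
def NormTower4Solvable (q : ℕ) (F : Type) [Field F] (a b x : F) : Prop :=
  ∀ (M1 : Type) [Field M1] [Algebra F M1] (α1 : M1),
    α1 ^ q = algebraMap F M1 (1 + (b * x ^ q + b ^ q)⁻¹) →
    IntermediateField.adjoin F {α1} = ⊤ →
    ∀ (M3 : Type) [Field M3] [Algebra M1 M3] (α3 : M3),
      α3 ^ q = algebraMap M1 M3 (algebraMap F M1 (1 + x⁻¹)) →
      IntermediateField.adjoin M1 {α3} = ⊤ →
      ∀ (M4 : Type) [Field M4] [Algebra M3 M4] (α4 : M4),
        α4 ^ q = algebraMap M3 M4 (algebraMap M1 M3 (algebraMap F M1 (1 + (a + a⁻¹) * x⁻¹))) →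
        IntermediateField.adjoin M3 {α4} = ⊤ →
        ∀ (M5 : Type) [Field M5] [Algebra M4 M5] (α5 : M5),
          α5 ^ q = algebraMap M4 M5 (algebraMap M3 M4 (algebraMap M1 M3 (algebraMap F M1 a))) →
          IntermediateField.adjoin M4 {α5} = ⊤ →
          ∃ y : M5, Algebra.norm M4 y =
            algebraMap M3 M4 (algebraMap M1 M3 (algebraMap F M1 (b * x ^ q + b ^ q)))

/-- Unsolvability of the norm equation `N(y) = b·x^q + b^q` over (every realization of)
the tower `L₄(a^{1/q})/L₄` as in `NormTower4Solvable`. -/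
def NormTower4Unsolvable (q : ℕ) (F : Type) [Field F] (a b x : F) : Prop :=
  ∀ (M1 : Type) [Field M1] [Algebra F M1] (α1 : M1),
    α1 ^ q = algebraMap F M1 (1 + (b * x ^ q + b ^ q)⁻¹) →
    IntermediateField.adjoin F {α1} = ⊤ →
    ∀ (M3 : Type) [Field M3] [Algebra M1 M3] (α3 : M3),
      α3 ^ q = algebraMap M1 M3 (algebraMap F M1 (1 + x⁻¹)) →
      IntermediateField.adjoin M1 {α3} = ⊤ →
      ∀ (M4 : Type) [Field M4] [Algebra M3 M4] (α4 : M4),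
        α4 ^ q = algebraMap M3 M4 (algebraMap M1 M3 (algebraMap F M1 (1 + (a + a⁻¹) * x⁻¹))) →
        IntermediateField.adjoin M3 {α4} = ⊤ →
        ∀ (M5 : Type) [Field M5] [Algebra M4 M5] (α5 : M5),
          α5 ^ q = algebraMap M4 M5 (algebraMap M3 M4 (algebraMap M1 M3 (algebraMap F M1 a))) →
          IntermediateField.adjoin M4 {α5} = ⊤ →
          ¬ ∃ y : M5, Algebra.norm M4 y =
            algebraMap M3 M4 (algebraMap M1 M3 (algebraMap F M1 (b * x ^ q + b ^ q)))

/-!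
Every element of `𝐋 = 𝐊(β₁, …, β_s)` lies in `E(T, β₁, …, β_s)` for a finite `T ⊆ 𝐊`, so
the finitely many elements the conclusion is about (the coefficients of the minimal
polynomials of `α` and `z` over `𝐋` and of the `β_j` over `𝐊`, and finitely many elements of
`𝐋` witnessing `z ∈ 𝐋(α)`) already lie in `L = Ê(β₁, …, β_s)` for a finitely generated
`Ê ⊆ 𝐊`. Once the minimal polynomial over a big field has its coefficients in a subfield, it
stays irreducible there, so the minimal polynomials, the degrees and, through
`N(z) = ((-1)^d μ_z(0))^{[F(α) : F(z)]}`, the norms agree.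
-/

open Polynomial IntermediateField Module

namespace IntermediateField

variable {E N : Type*} [Field E] [Field N] [Algebra E N]

theorem exists_finset_subset_adjoin_union {A B : Set N} (S : Finset N)
    (hS : (S : Set N) ⊆ adjoin E (A ∪ B)) :
    ∃ T : Finset N, (T : Set N) ⊆ A ∧ (S : Set N) ⊆ adjoin E (T ∪ B) := by
  classical
  choose T hTAB hxT using fun x : S => exists_finset_of_mem_adjoin (hS x.2)
  refine ⟨(S.attach.biUnion T).filter (· ∈ A), fun y hy => (Finset.mem_filter.mp hy).2,
    fun x hx => adjoin.mono E _ _ ?_ (hxT ⟨x, hx⟩)⟩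
  intro y hy
  rcases hTAB ⟨x, hx⟩ hy with hyA | hyB
  · exact Or.inl <| Finset.mem_filter.mpr
      ⟨Finset.mem_biUnion.mpr ⟨_, Finset.mem_attach _ _, hy⟩, hyA⟩
  · exact Or.inr hyB

theorem restrictScalars_adjoin_mono {K K' : IntermediateField E N} (h : K ≤ K') (B : Set N) :
    restrictScalars E (adjoin K B) ≤ restrictScalars E (adjoin K' B) := by
  rw [restrictScalars_adjoin_eq_sup, restrictScalars_adjoin_eq_sup]
  exact sup_le_sup_right h _

theorem exists_finset_forall_mem_adjoin_simple {K : IntermediateField E N} {α z : N}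
    (hz : z ∈ K⟮α⟯) :
    ∃ T : Finset N, (T : Set N) ⊆ K ∧
      ∀ L : IntermediateField E N, (T : Set N) ⊆ L → z ∈ L⟮α⟯ := by
  obtain ⟨T, hTK, hzT⟩ := exists_finset_subset_adjoin_union (E := E) (A := K) (B := {α}) {z}
    (by rwa [Finset.coe_singleton, Set.singleton_subset_iff, ← restrictScalars_adjoin])
  refine ⟨T, hTK, fun L hTL => ?_⟩
  change z ∈ IntermediateField.restrictScalars E L⟮α⟯
  rw [restrictScalars_adjoin]
  exact adjoin.mono _ _ _ (Set.union_subset_union_left _ hTL) (hzT (by simp))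

theorem exists_finiteDimensional_subset_restrictScalars_adjoin [Algebra.IsAlgebraic E N]
    {K : IntermediateField E N} {B : Set N} {S C : Finset N}
    (hS : (S : Set N) ⊆ restrictScalars E (adjoin K B)) (hC : (C : Set N) ⊆ K) :
    ∃ K₀ : IntermediateField E N, K₀ ≤ K ∧ FiniteDimensional E K₀ ∧ (C : Set N) ⊆ K₀ ∧
      (S : Set N) ⊆ restrictScalars E (adjoin K₀ B) := by
  classical
  rw [restrictScalars_adjoin] at hS
  obtain ⟨T, hTK, hST⟩ := exists_finset_subset_adjoin_union S hS
  refine ⟨adjoin E ↑(T ∪ C), adjoin_le_iff.mpr ?_,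
    finiteDimensional_adjoin fun x _ =>
      (Algebra.IsAlgebraic.isAlgebraic (R := E) x).isIntegral,
    fun x hx => subset_adjoin E _ (Finset.mem_union_right _ hx), hST.trans ?_⟩
  · rw [Finset.coe_union]
    exact Set.union_subset hTK hC
  · rw [restrictScalars_adjoin]
    exact adjoin.mono _ _ _ <| Set.union_subset_union_left _
      fun x hx => subset_adjoin E _ (Finset.mem_union_left _ hx)

theorem coeffs_map_subset {F : IntermediateField E N} (P : F[X]) :
    ((P.map (algebraMap F N)).coeffs : Set N) ⊆ F := by
  intro c hc
  obtain ⟨c, rfl⟩ := (lifts_iff_coeffs_subset_range _).mp ((mem_lifts _).mpr ⟨P, rfl⟩) hc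
  exact c.2

theorem minpoly_map_eq_of_coeffs_subset {L F : IntermediateField E N} (h : L ≤ F) {x : N}
    (hx : IsIntegral F x)
    (hcoeffs : (((minpoly F x).map (algebraMap F N)).coeffs : Set N) ⊆ L) :
    (minpoly L x).map (algebraMap L N) = (minpoly F x).map (algebraMap F N) := by
  have hlifts : (minpoly F x).map (algebraMap F N) ∈ lifts (algebraMap L N) := by
    rw [lifts_iff_coeffs_subset_range]
    exact fun y hy => ⟨⟨y, hcoeffs hy⟩, rfl⟩
  obtain ⟨P, hPmap, -, hPmonic⟩ := lifts_and_natDegree_eq_and_monic hlifts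
    ((minpoly.monic hx).map _)
  have hPF : P.map (inclusion h).toRingHom = minpoly F x := by
    apply Polynomial.map_injective (algebraMap F N) (algebraMap F N).injective
    rw [Polynomial.map_map]
    exact hPmap
  have hirr : Irreducible P :=
    hPmonic.irreducible_of_irreducible_map _ P (hPF ▸ minpoly.irreducible hx)
  have hroot : aeval x P = 0 := by
    rw [aeval_def, eval₂_eq_eval_map, hPmap, eval_map, ← aeval_def, minpoly.aeval]
  rw [← minpoly.eq_of_irreducible_of_monic hirr hroot hPmonic, hPmap]

end IntermediateField

section MinpolyMap

variable {F F' N : Type*} [Field F] [Field F'] [Field N] [Algebra F N] [Algebra F' N]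

theorem isIntegral_of_minpoly_map_eq {x : N} (hx : IsIntegral F x)
    (h : (minpoly F' x).map (algebraMap F' N) = (minpoly F x).map (algebraMap F N)) :
    IsIntegral F' x := by
  by_contra hx'
  rw [minpoly.eq_zero hx', Polynomial.map_zero, eq_comm,
    Polynomial.map_eq_zero_iff (algebraMap F N).injective] at h
  exact minpoly.ne_zero hx h

theorem natDegree_minpoly_eq_of_map_eq {x : N}
    (h : (minpoly F' x).map (algebraMap F' N) = (minpoly F x).map (algebraMap F N)) :
    (minpoly F' x).natDegree = (minpoly F x).natDegree := by
  simpa only [natDegree_map] using congrArg natDegree h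

theorem finrank_adjoin_simple_eq_of_minpoly_map_eq {x : N} (hx : IsIntegral F x)
    (h : (minpoly F' x).map (algebraMap F' N) = (minpoly F x).map (algebraMap F N)) :
    finrank F' F'⟮x⟯ = finrank F F⟮x⟯ := by
  rw [adjoin.finrank hx, adjoin.finrank (isIntegral_of_minpoly_map_eq hx h),
    natDegree_minpoly_eq_of_map_eq h]

theorem algebraMap_norm_adjoin_simple {α : N} (hα : IsIntegral F α) {z : N}
    (hz : z ∈ F⟮α⟯) :
    algebraMap F N (Algebra.norm F (⟨z, hz⟩ : F⟮α⟯)) =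
      ((-1) ^ (minpoly F z).natDegree * algebraMap F N ((minpoly F z).coeff 0)) ^
        ((minpoly F α).natDegree / (minpoly F z).natDegree) := by
  have : FiniteDimensional F F⟮α⟯ := adjoin.finiteDimensional hα
  set w : F⟮α⟯ := ⟨z, hz⟩
  have hw : IsIntegral F w := .of_finite F w
  have hminpoly : minpoly F w = minpoly F z := minpoly_eq w
  have hgen : Algebra.norm F (AdjoinSimple.gen F w) =
      (-1) ^ (minpoly F z).natDegree * (minpoly F z).coeff 0 := by
    simpa [minpoly_gen, hminpoly] using
      Algebra.PowerBasis.norm_gen_eq_coeff_zero_minpoly (adjoin.powerBasis hw)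
  have hfinrank :
      finrank F⟮w⟯ F⟮α⟯ = (minpoly F α).natDegree / (minpoly F z).natDegree := by
    rw [← adjoin.finrank hα, ← hminpoly, ← adjoin.finrank hw,
      ← Module.finrank_mul_finrank F F⟮w⟯ F⟮α⟯, Nat.mul_div_cancel_left _ Module.finrank_pos]
  rw [Algebra.norm_eq_norm_adjoin F w, hgen, hfinrank]
  simp

theorem algebraMap_norm_adjoin_simple_eq_of_minpoly_map_eq {α z : N} (hα : IsIntegral F α)
    (hz : z ∈ F⟮α⟯) (hz' : z ∈ F'⟮α⟯)
    (hminα : (minpoly F' α).map (algebraMap F' N) = (minpoly F α).map (algebraMap F N))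
    (hminz : (minpoly F' z).map (algebraMap F' N) = (minpoly F z).map (algebraMap F N)) :
    algebraMap F' N (Algebra.norm F' (⟨z, hz'⟩ : F'⟮α⟯)) =
      algebraMap F N (Algebra.norm F (⟨z, hz⟩ : F⟮α⟯)) := by
  have hcoeff :
      algebraMap F' N ((minpoly F' z).coeff 0) = algebraMap F N ((minpoly F z).coeff 0) := by
    simpa only [coeff_map] using congrArg (coeff · 0) hminz
  rw [algebraMap_norm_adjoin_simple (isIntegral_of_minpoly_map_eq hα hminα),
    algebraMap_norm_adjoin_simple hα, natDegree_minpoly_eq_of_map_eq hminα,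
    natDegree_minpoly_eq_of_map_eq hminz, hcoeff]

end MinpolyMap

theorem statement14_general
    (E : Type) [Field E]
    (N : Type) [Field N] [Algebra E N] [Algebra.IsAlgebraic E N]
    (BK BL : IntermediateField E N)
    (s : ℕ) (β : Fin s → N)
    (hgen : BL = IntermediateField.restrictScalars E
      (IntermediateField.adjoin (↥BK) (Set.range β)))
    (α : N)
    (z : N) (hz : z ∈ IntermediateField.adjoin (↥BL) {α}) :
    ∃ Ehat L : IntermediateField E N,
      Ehat ≤ BK ∧ FiniteDimensional E ↥Ehat ∧ L ≤ BL ∧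
      L = IntermediateField.restrictScalars E
        (IntermediateField.adjoin (↥Ehat) (Set.range β)) ∧
      (∀ j, Module.finrank (↥Ehat) (IntermediateField.adjoin (↥Ehat) {β j}) =
        Module.finrank (↥BK) (IntermediateField.adjoin (↥BK) {β j})) ∧
      (minpoly (↥L) α).map (algebraMap (↥L) N) =
        (minpoly (↥BL) α).map (algebraMap (↥BL) N) ∧
      ∃ hzL : z ∈ IntermediateField.adjoin (↥L) {α},
        algebraMap (↥BL) N (Algebra.norm (↥BL)
          (⟨z, hz⟩ : ↥(IntermediateField.adjoin (↥BL) {α}))) =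
        algebraMap (↥L) N (Algebra.norm (↥L)
          (⟨z, hzL⟩ : ↥(IntermediateField.adjoin (↥L) {α}))) := by
  have hint (F : IntermediateField E N) (x : N) : IsIntegral F x :=
    (Algebra.IsAlgebraic.isAlgebraic (R := E) x).isIntegral.tower_top
  classical
  obtain ⟨T, hTBL, hzT⟩ := exists_finset_forall_mem_adjoin_simple hz
  set S : Finset N := T ∪ ((minpoly BL α).map (algebraMap BL N)).coeffs ∪
    ((minpoly BL z).map (algebraMap BL N)).coeffs
  set C : Finset N :=
    Finset.univ.biUnion fun j => ((minpoly BK (β j)).map (algebraMap BK N)).coeffs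
  obtain ⟨Ehat, hEhatBK, hEhat, hCEhat, hSL⟩ :=
    exists_finiteDimensional_subset_restrictScalars_adjoin (B := Set.range β) (S := S) (C := C)
      (by
        rw [← hgen]
        simp only [S, Finset.coe_union, Set.union_subset_iff]
        exact ⟨⟨hTBL, coeffs_map_subset _⟩, coeffs_map_subset _⟩)
      (by simpa [C] using fun j => coeffs_map_subset (minpoly BK (β j)))
  set L := IntermediateField.restrictScalars E (adjoin Ehat (Set.range β))
  have hLBL : L ≤ BL := hgen ▸ restrictScalars_adjoin_mono hEhatBK _
  have hzL : z ∈ L⟮α⟯ := hzT L fun x hx => hSL (by simp [S, hx])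
  have hminα := minpoly_map_eq_of_coeffs_subset hLBL (hint BL α) fun x hx => hSL (by simp [S, hx])
  have hminz := minpoly_map_eq_of_coeffs_subset hLBL (hint BL z) fun x hx => hSL (by simp [S, hx])
  refine ⟨Ehat, L, hEhatBK, hEhat, hLBL, rfl, fun j => ?_, hminα, hzL,
    (algebraMap_norm_adjoin_simple_eq_of_minpoly_map_eq (hint BL α) hz hzL hminα hminz).symm⟩
  exact finrank_adjoin_simple_eq_of_minpoly_map_eq (hint BK (β j)) <|
    minpoly_map_eq_of_coeffs_subset hEhatBK (hint BK (β j)) fun x hx =>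
      hCEhat (Finset.mem_biUnion.mpr ⟨j, Finset.mem_univ _, hx⟩)

/-- Given a tower `𝔽_p(t) ⊆ E ⊆ 𝐊 ⊆ 𝐋` with `E/𝔽_p(t)` finite,
`𝐊/E` infinite and `𝐋 = 𝐊(β₁, …, β_s)`, an element `α` algebraic over `𝐋` and
`z ∈ 𝐋(α)`, there are a finite extension `Ê` of `E` inside `𝐊` and
`L = Ê(β₁, …, β_s) ⊆ 𝐋` such that `[Ê(β_j) : Ê] = [𝐊(β_j) : 𝐊]` for all `j`, `α` has
the same monic irreducible polynomial over `L` as over `𝐋`, `z ∈ L(α)`, and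
`N_{𝐋(α)/𝐋}(z) = N_{L(α)/L}(z)`. -/
theorem statement14 (p : ℕ) [Fact p.Prime]
    (E : Type) [Field E] [Algebra (RatFunc (ZMod p)) E]
    [FiniteDimensional (RatFunc (ZMod p)) E]
    (N : Type) [Field N] [Algebra E N] [Algebra.IsAlgebraic E N]
    (BK BL : IntermediateField E N) (hKL : BK ≤ BL)
    (hinf : ¬ FiniteDimensional E ↥BK)
    (s : ℕ) (β : Fin s → N) (hβ : ∀ j, β j ∈ BL)
    (hgen : BL = IntermediateField.restrictScalars E
      (IntermediateField.adjoin (↥BK) (Set.range β)))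
    (α : N) (hα : IsAlgebraic (↥BL) α)
    (z : N) (hz : z ∈ IntermediateField.adjoin (↥BL) {α}) :
    ∃ Ehat L : IntermediateField E N,
      Ehat ≤ BK ∧ FiniteDimensional E ↥Ehat ∧ L ≤ BL ∧
      L = IntermediateField.restrictScalars E
        (IntermediateField.adjoin (↥Ehat) (Set.range β)) ∧
      (∀ j, Module.finrank (↥Ehat) (IntermediateField.adjoin (↥Ehat) {β j}) =
        Module.finrank (↥BK) (IntermediateField.adjoin (↥BK) {β j})) ∧
      (minpoly (↥L) α).map (algebraMap (↥L) N) =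
        (minpoly (↥BL) α).map (algebraMap (↥BL) N) ∧
      ∃ hzL : z ∈ IntermediateField.adjoin (↥L) {α},
        algebraMap (↥BL) N (Algebra.norm (↥BL)
          (⟨z, hz⟩ : ↥(IntermediateField.adjoin (↥BL) {α}))) =
        algebraMap (↥L) N (Algebra.norm (↥L)
          (⟨z, hzL⟩ : ↥(IntermediateField.adjoin (↥L) {α}))) :=
  statement14_general E N BK BL s β hgen α z hz
end
end

section
/- Let K be a global function field of characteristic p containing a primitive q-th root of unity, where q ≠ p is prime, and let 𝔭_K be a prime of K. Let a, b, x ∈ K^× satisfy: (1) ord_{𝔭_K} b < 0 and ord_{𝔭_K} b ≢ 0 mod q; (2) a is a unit at 𝔭_K and the residue of a is not a q-th power in the residue field of 𝔭_K; (3) ord_{𝔭_K} x < ((q−1)/q)·ord_{𝔭_K} b. Define L_1 = K((1+(bx^q+b^q)^{-1})^{1/q}), L_3 = L_1((1+x^{-1})^{1/q}), and L_4 = L_3((1+(a+a^{-1})x^{-1})^{1/q}) (under the hypotheses all elements inverted here are nonzero). Then there is no y ∈ L_4(a^{1/q}) with N_{L_4(a^{1/q})/L_4}(y) = b x^q + b^q.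 -/
noncomputable section

/-!
Write `c = b x^q + b^q`. Hypotheses (1) and (3) give `ord_𝔭 x < 0` and
`ord_𝔭 c = ord_𝔭 b + q ord_𝔭 x < 0`, so the radicands `1 + c⁻¹`, `1 + x⁻¹` and
`1 + (a + a⁻¹) x⁻¹` are `≡ 1 mod 𝔭`. As `q` is a unit at `𝔭`, Newton's method produces
their `q`-th roots in the completion, so at each step of the tower `𝔭` has an extension in
which the field below is dense. The resulting prime `𝔓` of `L₄` has `ord_𝔓 = ord_𝔭` on `K`
and the same residue field, so `a` is still a unit whose residue is not a `q`-th power. Then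
`X^q - a` stays irreducible modulo `𝔓`, the Gauss valuation of `L₄(a^{1/q})` is a
Galois-invariant extension of `ord_𝔓`, and every nonzero norm from `L₄(a^{1/q})` has order
divisible by `q`; but `ord_𝔭 c ≡ ord_𝔭 b ≢ 0 mod q`.
-/

namespace FFPrime

variable {K : Type} [Field K] (w : FFPrime K)

def toAddValuation : AddValuation K (WithTop ℤ) :=
  AddValuation.of w.ord w.ord_zero w.ord_one w.ord_add w.ord_mul

lemma ord_neg (x : K) : w.ord (-x) = w.ord x := w.toAddValuation.map_neg x

lemma ord_sub_comm (x y : K) : w.ord (x - y) = w.ord (y - x) :=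
  w.toAddValuation.map_sub_swap x y

lemma ord_inv (x : K) : w.ord x⁻¹ = -w.ord x := w.toAddValuation.map_inv

lemma ord_pow (x : K) (n : ℕ) : w.ord (x ^ n) = n • w.ord x := w.toAddValuation.map_pow x n

lemma ord_add_eq_of_lt {x y : K} (h : w.ord x < w.ord y) : w.ord (x + y) = w.ord x :=
  w.toAddValuation.map_add_eq_of_lt_left h

lemma le_ord_add {x y : K} {B : WithTop ℤ} (hx : B ≤ w.ord x) (hy : B ≤ w.ord y) :
    B ≤ w.ord (x + y) :=
  w.toAddValuation.map_le_add hx hy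

lemma le_ord_sub {x y : K} {B : WithTop ℤ} (hx : B ≤ w.ord x) (hy : B ≤ w.ord y) :
    B ≤ w.ord (x - y) :=
  w.toAddValuation.map_le_sub hx hy

lemma le_ord_sum {ι : Type*} (s : Finset ι) (f : ι → K) {B : WithTop ℤ}
    (h : ∀ i ∈ s, B ≤ w.ord (f i)) : B ≤ w.ord (∑ i ∈ s, f i) :=
  w.toAddValuation.map_le_sum h

lemma ord_eq_top_iff {x : K} : w.ord x = ⊤ ↔ x = 0 := w.toAddValuation.top_iff

lemma exists_ord_eq_coe {x : K} (hx : x ≠ 0) : ∃ n : ℤ, w.ord x = n :=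
  WithTop.ne_top_iff_exists.mp (w.ord_ne_top x hx) |>.imp fun _ h => h.symm

lemma ord_mul_pos {x y : K} (hx : 0 ≤ w.ord x) (hy : 0 < w.ord y) : 0 < w.ord (x * y) := by
  rw [w.ord_mul]
  exact hy.trans_le (le_add_of_nonneg_left hx)

lemma ord_inv_pos {x : K} (hx : w.ord x < 0) : 0 < w.ord x⁻¹ := by
  obtain ⟨n, hn⟩ := w.exists_ord_eq_coe (x := x) (by rintro rfl; simp [w.ord_zero] at hx)
  rw [hn, ← WithTop.coe_zero, WithTop.coe_lt_coe] at hx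
  rw [w.ord_inv, hn, ← WithTop.LinearOrderedAddCommGroup.coe_neg, ← WithTop.coe_zero,
    WithTop.coe_lt_coe]
  omega

lemma ord_add_inv_nonneg {x : K} (hx : w.ord x = 0) : 0 ≤ w.ord (x + x⁻¹) :=
  w.le_ord_add hx.ge (by rw [w.ord_inv, hx, neg_zero])

lemma ord_natCast_nonneg (n : ℕ) : 0 ≤ w.ord (n : K) := by
  induction n with
  | zero => simp [w.ord_zero]
  | succ n ih => exact Nat.cast_succ (R := K) n ▸ w.le_ord_add ih w.ord_one.ge

lemma ord_eq_zero_of_pow_eq_one {x : K} {k : ℕ} (hk : k ≠ 0) (h : x ^ k = 1) : w.ord x = 0 := by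
  obtain ⟨n, hn⟩ := w.exists_ord_eq_coe (x := x) (by rintro rfl; simp [zero_pow hk] at h)
  have := w.ord_pow x k
  rw [h, w.ord_one, hn, ← WithTop.coe_nsmul, ← WithTop.coe_zero, WithTop.coe_inj,
    nsmul_eq_mul] at this
  rw [hn, (mul_eq_zero.mp this.symm).resolve_left (by exact_mod_cast hk), WithTop.coe_zero]

lemma ord_natCast_eq_zero {p : ℕ} [Fact p.Prime] (χ : ZMod p →+* K) {n : ℕ}
    (hn : ¬ p ∣ n) : w.ord (n : K) = 0 :=
  w.ord_eq_zero_of_pow_eq_one (Nat.sub_ne_zero_of_lt (Fact.out : p.Prime).one_lt) <| by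
    rw [← map_natCast χ, ← map_pow, ZMod.pow_card_sub_one_eq_one
      (by rwa [Ne, ZMod.natCast_eq_zero_iff]), map_one]

lemma ord_eq_zero_of_ord_sub_one_pos {x : K} (h : 0 < w.ord (x - 1)) : w.ord x = 0 := by
  rw [← sub_add_cancel x 1, add_comm, w.ord_add_eq_of_lt (w.ord_one ▸ h), w.ord_one]

lemma ordDvd_of_ordDvd_mul_pow {q : ℕ} {b x : K} (hx : x ≠ 0) (h : w.OrdDvd q (b * x ^ q)) :
    w.OrdDvd q b := by
  obtain ⟨n, hn⟩ := h
  obtain ⟨m, hm⟩ := w.exists_ord_eq_coe hx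
  obtain ⟨k, hk⟩ := w.exists_ord_eq_coe (x := b) <| by
    rintro rfl
    rw [zero_mul, w.ord_zero] at hn
    exact WithTop.top_ne_coe hn
  rw [w.ord_mul, w.ord_pow, hk, hm, ← WithTop.coe_nsmul, ← WithTop.coe_add, WithTop.coe_inj,
    nsmul_eq_mul] at hn
  exact ⟨n - m, by rw [hk, mul_sub, ← hn, add_sub_cancel_right]⟩

lemma ord_neg_and_ord_mul_pow_lt {b x : K} {q : ℕ} (hq : 0 < q) (hb : w.ord b < 0)
    (h : ((q : ℤ) : WithTop ℤ) * w.ord x < (((q : ℤ) - 1 : ℤ) : WithTop ℤ) * w.ord b) :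
    w.ord x < 0 ∧ w.ord (b * x ^ q) < min (w.ord (b ^ q)) 0 := by
  obtain ⟨vb, hvb⟩ := w.exists_ord_eq_coe (x := b) (by rintro rfl; simp [w.ord_zero] at hb)
  obtain ⟨vx, hvx⟩ := w.exists_ord_eq_coe (x := x) <| by
    rintro rfl
    rw [w.ord_zero, WithTop.mul_top (by exact_mod_cast hq.ne')] at h
    exact not_top_lt h
  rw [hvb, ← WithTop.coe_zero, WithTop.coe_lt_coe] at hb
  rw [hvb, hvx, ← WithTop.coe_mul, ← WithTop.coe_mul, WithTop.coe_lt_coe] at h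
  have hq' : (1 : ℤ) ≤ q := by exact_mod_cast hq
  rw [w.ord_mul, w.ord_pow, w.ord_pow, hvb, hvx, ← WithTop.coe_zero, ← WithTop.coe_nsmul,
    ← WithTop.coe_nsmul, ← WithTop.coe_add, ← WithTop.coe_min, WithTop.coe_lt_coe,
    WithTop.coe_lt_coe, nsmul_eq_mul, nsmul_eq_mul, lt_min_iff]
  exact ⟨by nlinarith, by linarith, by nlinarith⟩

def valuationSubring : ValuationSubring K := w.toAddValuation.toValuation.valuationSubring

lemma residue_eq_zero_iff (x : w.valuationSubring) :
    IsLocalRing.residue w.valuationSubring x = 0 ↔ 0 < w.ord x := by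
  rw [IsLocalRing.residue_eq_zero_iff, IsLocalRing.mem_maximalIdeal, mem_nonunits_iff]
  exact Valuation.Integer.not_isUnit_iff_valuation_lt_one

lemma ord_sub_le_ord_pow_sub_pow {x y : K} (hx : 0 ≤ w.ord x) (hy : 0 ≤ w.ord y) (n : ℕ) :
    w.ord (x - y) ≤ w.ord (x ^ n - y ^ n) := by
  obtain ⟨c, hc⟩ := sub_dvd_pow_sub_pow (⟨x, hx⟩ : w.valuationSubring) ⟨y, hy⟩ n
  rw [show x ^ n - y ^ n = (x - y) * c from congrArg Subtype.val hc, w.ord_mul]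
  exact le_add_of_nonneg_right c.2

def comap {A B : Type} [Field A] [Field B] (w : FFPrime B) (e : A ≃+* B) : FFPrime A where
  ord x := w.ord (e x)
  ord_zero := by simp [w.ord_zero]
  ord_ne_top x hx := w.ord_ne_top _ (by simpa using hx)
  ord_one := by simp [w.ord_one]
  ord_mul x y := by simp [w.ord_mul]
  ord_add x y := by simpa using w.ord_add (e x) (e y)
  ord_surj n := (w.ord_surj n).elim fun x hx => ⟨e.symm x, by simpa using hx⟩

/-! ### Polynomials over the valuation ring and Newton's method -/

open Polynomial

def gaussOrd (P : K[X]) : WithTop ℤ := P.support.inf fun i => w.ord (P.coeff i)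

lemma le_gaussOrd_iff {P : K[X]} {B : WithTop ℤ} :
    B ≤ w.gaussOrd P ↔ ∀ i, B ≤ w.ord (P.coeff i) := by
  refine Finset.le_inf_iff.trans ⟨fun h i => ?_, fun h i _ => h i⟩
  by_cases hi : i ∈ P.support
  · exact h i hi
  · rw [notMem_support_iff.mp hi, w.ord_zero]
    exact le_top

lemma lt_gaussOrd_iff {P : K[X]} {B : WithTop ℤ} (hB : B < ⊤) :
    B < w.gaussOrd P ↔ ∀ i, B < w.ord (P.coeff i) := by
  refine (Finset.lt_inf_iff hB).trans ⟨fun h i => ?_, fun h i _ => h i⟩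
  by_cases hi : i ∈ P.support
  · exact h i hi
  · rwa [notMem_support_iff.mp hi, w.ord_zero]

lemma gaussOrd_le_ord_coeff (P : K[X]) (i : ℕ) : w.gaussOrd P ≤ w.ord (P.coeff i) :=
  w.le_gaussOrd_iff.mp le_rfl i

lemma exists_gaussOrd_eq_ord_coeff {P : K[X]} (hP : P ≠ 0) :
    ∃ i, w.gaussOrd P = w.ord (P.coeff i) :=
  (Finset.exists_mem_eq_inf _ (nonempty_support_iff.mpr hP) _).imp fun _ h => h.2

lemma exists_le_ord_coeff (P : K[X]) :
    ∃ b : ℤ, ∀ i, (b : WithTop ℤ) ≤ w.ord (P.coeff i) := by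
  obtain ⟨b, hb⟩ : ∃ b : ℤ, (b : WithTop ℤ) ≤ w.gaussOrd P := by
    cases w.gaussOrd P with
    | top => exact ⟨0, le_top⟩
    | coe b => exact ⟨b, le_rfl⟩
  exact ⟨b, w.le_gaussOrd_iff.mp hb⟩

lemma gaussOrd_C_mul (c : K) (P : K[X]) : w.gaussOrd (C c * P) = w.ord c + w.gaussOrd P := by
  by_cases hP : P = 0
  · simp [hP, gaussOrd]
  obtain ⟨i, hi⟩ := w.exists_gaussOrd_eq_ord_coeff hP
  refine le_antisymm ?_ (w.le_gaussOrd_iff.mpr fun j => ?_)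
  · rw [hi, ← w.ord_mul, ← coeff_C_mul]
    exact w.gaussOrd_le_ord_coeff _ i
  · rw [coeff_C_mul, w.ord_mul]
    exact add_le_add le_rfl (w.gaussOrd_le_ord_coeff P j)

lemma gaussOrd_eq_top_iff {P : K[X]} : w.gaussOrd P = ⊤ ↔ P = 0 := by
  simp [gaussOrd, Finset.inf_eq_top_iff, w.ord_eq_top_iff, Polynomial.ext_iff]

lemma gaussOrd_C (c : K) : w.gaussOrd (C c) = w.ord c := by
  by_cases hc : c = 0
  · simp [hc, gaussOrd, w.ord_zero]
  · simp [gaussOrd, support_C hc]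

lemma gaussOrd_congr {P Q : K[X]} (h : ∀ i, w.ord (P.coeff i) = w.ord (Q.coeff i)) :
    w.gaussOrd P = w.gaussOrd Q :=
  le_antisymm (w.le_gaussOrd_iff.mpr fun i => h i ▸ w.gaussOrd_le_ord_coeff P i)
    (w.le_gaussOrd_iff.mpr fun i => (h i).symm ▸ w.gaussOrd_le_ord_coeff Q i)

lemma gaussOrd_map_subtype_nonneg (F : w.valuationSubring[X]) :
    0 ≤ w.gaussOrd (F.map w.valuationSubring.subtype) :=
  w.le_gaussOrd_iff.mpr fun i => by rw [coeff_map]; exact (F.coeff i).2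

lemma map_residue_eq_zero_iff (F : w.valuationSubring[X]) :
    F.map (IsLocalRing.residue w.valuationSubring) = 0 ↔
      0 < w.gaussOrd (F.map w.valuationSubring.subtype) := by
  rw [← WithTop.coe_zero, w.lt_gaussOrd_iff (WithTop.coe_lt_top 0), Polynomial.ext_iff]
  simp only [coeff_map, coeff_zero, w.residue_eq_zero_iff]
  rfl

lemma le_ord_eval {P : K[X]} {b : WithTop ℤ} (hb : ∀ i, b ≤ w.ord (P.coeff i)) {x : K}
    (hx : 0 ≤ w.ord x) : b ≤ w.ord (P.eval x) := by
  rw [eval_eq_sum_range]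
  refine w.le_ord_sum _ _ fun i _ => ?_
  rw [w.ord_mul, w.ord_pow]
  exact le_add_of_le_of_nonneg (hb i) (nsmul_nonneg hx i)

lemma coe_eval (Q : w.valuationSubring[X]) (x : w.valuationSubring) :
    ((Q.eval x : w.valuationSubring) : K) = (Q.map w.valuationSubring.subtype).eval (x : K) :=
  (eval₂_at_apply (p := Q) w.valuationSubring.subtype x).symm.trans (eval_map _ _).symm

lemma exists_map_eq_of_ord_coeff_nonneg {P : K[X]} (hP : ∀ i, 0 ≤ w.ord (P.coeff i)) :
    ∃ Q : w.valuationSubring[X], Q.map w.valuationSubring.subtype = P :=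
  (lifts_iff_coeff_lifts P).mpr fun i => ⟨⟨_, hP i⟩, rfl⟩

lemma le_ord_eval_sub_eval {P : K[X]} {b : WithTop ℤ} (hb : ∀ i, b ≤ w.ord (P.coeff i))
    {x y : K} (hx : 0 ≤ w.ord x) (hy : 0 ≤ w.ord y) :
    b + w.ord (x - y) ≤ w.ord (P.eval x - P.eval y) := by
  rw [eval_eq_sum_range' (Nat.lt_succ_self _), eval_eq_sum_range' (Nat.lt_succ_self _),
    ← Finset.sum_sub_distrib]
  refine w.le_ord_sum _ _ fun i _ => ?_
  rw [← mul_sub, w.ord_mul]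
  exact add_le_add (hb i) (w.ord_sub_le_ord_pow_sub_pow hx hy i)

lemma two_nsmul_le_ord_taylor {P : K[X]} (hP : ∀ i, 0 ≤ w.ord (P.coeff i)) {x y : K}
    (hx : 0 ≤ w.ord x) (hy : 0 ≤ w.ord y) :
    2 • w.ord y ≤ w.ord (P.eval (x + y) - P.eval x - P.derivative.eval x * y) := by
  obtain ⟨Q, rfl⟩ := w.exists_map_eq_of_ord_coeff_nonneg hP
  obtain ⟨k, hk⟩ := binomExpansion Q ⟨x, hx⟩ ⟨y, hy⟩
  have hk' := congrArg Subtype.val hk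
  push_cast [coe_eval] at hk'
  rw [derivative_map, hk', show ∀ a b c : K, a + b + c - a - b = c from fun _ _ _ => by ring,
    w.ord_mul, w.ord_pow]
  exact le_add_of_nonneg_left k.2

lemma ord_coeff_derivative_nonneg {f : K[X]} (hf : ∀ i, 0 ≤ w.ord (f.coeff i)) (i : ℕ) :
    0 ≤ w.ord (f.derivative.coeff i) := by
  rw [coeff_derivative, w.ord_mul]
  exact add_nonneg (hf _) (by exact_mod_cast w.ord_natCast_nonneg (i + 1))

lemma newtonMap_spec {f : K[X]} (hf : ∀ i, 0 ≤ w.ord (f.coeff i)) {x : K} (hx : 0 ≤ w.ord x)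
    (hfx' : w.ord (f.derivative.eval x) = 0) (hfx : 0 < w.ord (f.eval x)) :
    0 ≤ w.ord (f.newtonMap x) ∧ w.ord (f.derivative.eval (f.newtonMap x)) = 0 ∧
      2 • w.ord (f.eval x) ≤ w.ord (f.eval (f.newtonMap x)) ∧
      w.ord (f.newtonMap x - x) = w.ord (f.eval x) := by
  set d := (f.derivative.eval x)⁻¹ * f.eval x
  have hstep : f.newtonMap x = x + -d := by
    simp [newtonMap_apply, d, Ring.inverse_eq_inv, sub_eq_add_neg]
  have hd : w.ord (-d) = w.ord (f.eval x) := by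
    rw [w.ord_neg, w.ord_mul, w.ord_inv, hfx', neg_zero, zero_add]
  have hd0 : 0 ≤ w.ord (-d) := hd ▸ hfx.le
  have hfx'0 : f.derivative.eval x ≠ 0 := fun h => by simp [h, w.ord_zero] at hfx'
  refine ⟨hstep ▸ w.le_ord_add hx hd0, ?_, ?_, by rw [hstep, add_sub_cancel_left, hd]⟩
  · have hdiff := w.le_ord_eval_sub_eval (w.ord_coeff_derivative_nonneg hf)
      (w.le_ord_add hx hd0) hx
    rw [zero_add, add_sub_cancel_left, hd] at hdiff
    rw [hstep, ← add_sub_cancel (f.derivative.eval x) (f.derivative.eval (x + -d)),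
      w.ord_add_eq_of_lt (hfx'.symm ▸ hfx.trans_le hdiff), hfx']
  · -- Taylor: `f (x - d) = f x - f' x * d + O(d²)`, and `f' x * d = f x`.
    have htaylor := w.two_nsmul_le_ord_taylor hf hx hd0
    rwa [mul_neg, ← mul_assoc, mul_inv_cancel₀ hfx'0, one_mul, sub_neg_eq_add,
      sub_add_cancel, hd, ← hstep] at htaylor

lemma exists_newton_seq {f : K[X]} (hf : ∀ i, 0 ≤ w.ord (f.coeff i)) {x₀ : K}
    (hx₀ : 0 ≤ w.ord x₀) (hfx₀' : w.ord (f.derivative.eval x₀) = 0)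
    (hfx₀ : 0 < w.ord (f.eval x₀)) :
    ∃ r : ℕ → K, (∀ n, 0 ≤ w.ord (r n)) ∧
      (∀ n : ℕ, ((n : ℤ) : WithTop ℤ) < w.ord (f.eval (r n))) ∧
      ∀ n m : ℕ, n ≤ m → ((n : ℤ) : WithTop ℤ) < w.ord (r m - r n) := by
  set r : ℕ → K := fun n => f.newtonMap^[n] x₀
  have hr_succ (n : ℕ) : r (n + 1) = f.newtonMap (r n) := Function.iterate_succ_apply' _ _ _
  have hinv (n : ℕ) : 0 ≤ w.ord (r n) ∧ w.ord (f.derivative.eval (r n)) = 0 ∧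
      ((n : ℤ) : WithTop ℤ) < w.ord (f.eval (r n)) := by
    induction n with
    | zero => exact ⟨hx₀, hfx₀', hfx₀⟩
    | succ n ih =>
      obtain ⟨h1, h2, h3, -⟩ := w.newtonMap_spec hf ih.1 ih.2.1 (ih.2.2.trans_le' (by simp))
      refine hr_succ n ▸ ⟨h1, h2, lt_of_lt_of_le ?_ h3⟩
      cases h : w.ord (f.eval (r n)) with
      | top => exact WithTop.coe_lt_top _
      | coe m =>
        rw [h, WithTop.coe_lt_coe] at ih
        rw [← WithTop.coe_nsmul, WithTop.coe_lt_coe, two_nsmul]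
        push_cast
        omega
  have hstep (n : ℕ) : ((n : ℤ) : WithTop ℤ) < w.ord (r (n + 1) - r n) := by
    rw [hr_succ, (w.newtonMap_spec hf (hinv n).1 (hinv n).2.1
      ((hinv n).2.2.trans_le' (by simp))).2.2.2]
    exact (hinv n).2.2
  refine ⟨r, fun n => (hinv n).1, fun n => (hinv n).2.2, fun n m hnm => ?_⟩
  induction m, hnm using Nat.le_induction with
  | base => simp [w.ord_zero]
  | succ m hnm ih =>
    rw [← sub_add_sub_cancel (r (m + 1)) (r m) (r n)]
    exact lt_of_lt_of_le (lt_min ((hstep m).trans_le' (by exact_mod_cast hnm)) ih) (w.ord_add _ _)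

end FFPrime

namespace FFPrime

/-- `w'` lies over `w` with ramification index and residue degree `1` (as a prime that splits
completely), in the stronger form that `φ K` is dense for `w'`. -/
structure IsDenseExtension {K L : Type} [Field K] [Field L] (w' : FFPrime L) (w : FFPrime K)
    (φ : K →+* L) : Prop where
  ord_map : ∀ c, w'.ord (φ c) = w.ord c
  dense : ∀ (z : L) (N : ℤ), ∃ c, (N : WithTop ℤ) < w'.ord (z - φ c)

namespace IsDenseExtension

variable {K L E : Type} [Field K] [Field L] [Field E] {w'' : FFPrime E} {w' : FFPrime L}
  {w : FFPrime K} {φ : K →+* L} {ψ : L →+* E}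

lemma refl (w : FFPrime K) : w.IsDenseExtension w (algebraMap K K) :=
  ⟨fun _ => rfl, fun z N => ⟨z, by simp [sub_self, w.ord_zero]⟩⟩

lemma trans (D₂ : w''.IsDenseExtension w' ψ) (D₁ : w'.IsDenseExtension w φ) :
    w''.IsDenseExtension w (ψ.comp φ) := by
  refine ⟨fun c => (D₂.ord_map _).trans (D₁.ord_map c), fun z N => ?_⟩
  obtain ⟨c₁, hc₁⟩ := D₂.dense z N
  obtain ⟨c, hc⟩ := D₁.dense c₁ N
  refine ⟨c, ?_⟩
  rw [RingHom.comp_apply, ← sub_add_sub_cancel z (ψ c₁)]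
  refine lt_of_lt_of_le (lt_min hc₁ ?_) (w''.ord_add _ _)
  rwa [← map_sub, D₂.ord_map]

lemma comap_algEquiv [Algebra K L] [Algebra K E] (D : w'.IsDenseExtension w (algebraMap K L))
    (Ψ : L ≃ₐ[K] E) : (w'.comap Ψ.symm.toRingEquiv).IsDenseExtension w (algebraMap K E) where
  ord_map c := by
    change w'.ord (Ψ.symm (algebraMap K E c)) = _
    rw [AlgEquiv.commutes, D.ord_map]
  dense z N := (D.dense (Ψ.symm z) N).imp fun c hc => by
    change _ < w'.ord (Ψ.symm (z - algebraMap K E c))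
    rwa [map_sub, AlgEquiv.commutes]

lemma not_lt_ord_sub_pow (D : w'.IsDenseExtension w φ) {q : ℕ} (hq : 0 < q) {a : K}
    (ha : w.ord a = 0) (hres : ∀ z : K, ¬ 0 < w.ord (a - z ^ q)) (z : L) :
    ¬ 0 < w'.ord (φ a - z ^ q) := by
  intro hz
  have ha' : w'.ord (φ a) = 0 := (D.ord_map a).trans ha
  have hzq : w'.ord (z ^ q) = 0 := by
    rw [← sub_sub_cancel (φ a) (z ^ q), sub_eq_add_neg,
      w'.ord_add_eq_of_lt (by rwa [w'.ord_neg, ha']), ha']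
  have hz₀ : 0 ≤ w'.ord z := by
    obtain ⟨m, hm⟩ := w'.exists_ord_eq_coe (x := z) <| by
      rintro rfl
      simp [zero_pow hq.ne', w'.ord_zero] at hzq
    rw [w'.ord_pow, hm, ← WithTop.coe_nsmul, WithTop.coe_eq_zero, nsmul_eq_mul,
      mul_eq_zero] at hzq
    rw [hm, hzq.resolve_left (by exact_mod_cast hq.ne'), WithTop.coe_zero]
  obtain ⟨c, hc⟩ := D.dense z 0
  rw [WithTop.coe_zero] at hc
  have hc₀ : 0 ≤ w'.ord (φ c) := by simpa using w'.le_ord_sub hz₀ hc.le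
  apply hres c
  rw [← D.ord_map, map_sub, map_pow, ← sub_add_sub_cancel _ (z ^ q)]
  refine lt_of_lt_of_le (lt_min hz ?_) (w'.ord_add _ _)
  exact hc.trans_le (w'.ord_sub_le_ord_pow_sub_pow hz₀ hc₀ q)

end IsDenseExtension

end FFPrime

section AdjoinRootRemainder

open Polynomial

namespace AdjoinRoot

variable {R : Type} [Field R] {g : R[X]} (hg : g.Monic)

lemma modByMonicHom_algebraMap (hdeg : 0 < g.degree) (c : R) :
    modByMonicHom hg (algebraMap R (AdjoinRoot g) c) = C c :=
  (modByMonicHom_mk hg (C c)).trans <| (modByMonic_eq_self_iff hg).mpr (degree_C_le.trans_lt hdeg)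

lemma degree_modByMonicHom_lt (z : AdjoinRoot g) : (modByMonicHom hg z).degree < g.degree := by
  rw [← mk_leftInverse hg z, modByMonicHom_mk]
  exact degree_modByMonic_lt _ hg

lemma modByMonicHom_eq_zero_iff {z : AdjoinRoot g} : modByMonicHom hg z = 0 ↔ z = 0 :=
  ⟨fun h => by rw [← mk_leftInverse hg z, h, map_zero], fun h => by rw [h, map_zero]⟩

lemma dvd_modByMonicHom_mul_sub (z z' : AdjoinRoot g) :
    g ∣ modByMonicHom hg (z * z') - modByMonicHom hg z * modByMonicHom hg z' := by
  rw [← mk_eq_mk, mk_leftInverse hg, (mk g).map_mul, mk_leftInverse hg, mk_leftInverse hg]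

lemma isCoprime_modByMonicHom (hirr : Irreducible g) {z : AdjoinRoot g} (hz : z ≠ 0) :
    IsCoprime g (modByMonicHom hg z) := by
  refine (hirr.coprime_iff_not_dvd).mpr fun hdvd => ?_
  have hne : modByMonicHom hg z ≠ 0 := mt (modByMonicHom_eq_zero_iff hg).mp hz
  exact (degree_le_of_dvd hdvd hne).not_gt (degree_modByMonicHom_lt hg z)

end AdjoinRoot

lemma nonempty_algEquiv_adjoinRoot {M M' : Type} [Field M] [Field M'] [Algebra M M'] {g : M[X]}
    (hg : g.Monic) (hirr : Irreducible g) {α : M'} (hα : aeval α g = 0)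
    (hadj : IntermediateField.adjoin M {α} = ⊤) : Nonempty (AdjoinRoot g ≃ₐ[M] M') :=
  ⟨(AdjoinRoot.algEquivOfEq M _ _ (minpoly.eq_of_irreducible_of_monic hirr hα hg)).trans <|
    (IntermediateField.adjoinRootEquivAdjoin M ⟨g, hg, hα⟩).trans <|
      (IntermediateField.equivOfEq hadj).trans IntermediateField.topEquiv⟩

end AdjoinRootRemainder

namespace FFPrime

open Polynomial Filter AdjoinRoot

variable {M : Type} [Field M] (w : FFPrime M)

lemma eventually_ord_eq_of_lt_ord_sub {x y : ℕ → M} {V : ℤ}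
    (hx : ∀ᶠ n in atTop, w.ord (x n) = V)
    (hxy : ∀ᶠ n in atTop, (V : WithTop ℤ) < w.ord (y n - x n)) :
    ∀ᶠ n in atTop, w.ord (y n) = V := by
  filter_upwards [hx, hxy] with n hxn hxyn
  rw [← add_sub_cancel (x n) (y n), w.ord_add_eq_of_lt (hxn ▸ hxyn), hxn]

/-! ### Extending a valuation along approximate roots -/

section ApproximateRoots

variable {g : M[X]} {r : ℕ → M} (hr : ∀ n, 0 ≤ w.ord (r n))
  (hgr : ∀ n : ℕ, ((n : ℤ) : WithTop ℤ) < w.ord (g.eval (r n)))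
  (hcauchy : ∀ n m : ℕ, n ≤ m → ((n : ℤ) : WithTop ℤ) < w.ord (r m - r n))
include hr

include hgr in
lemma eventually_lt_ord_eval_mul (S : M[X]) (N : ℤ) :
    ∀ᶠ n in atTop, (N : WithTop ℤ) < w.ord (S.eval (r n) * g.eval (r n)) := by
  obtain ⟨b, hb⟩ := w.exists_le_ord_coeff S
  filter_upwards [eventually_ge_atTop (N - b).toNat] with n hn
  rw [w.ord_mul]
  calc (N : WithTop ℤ) ≤ ((b + n : ℤ) : WithTop ℤ) := by exact_mod_cast (by omega)
    _ < w.ord (S.eval (r n)) + w.ord (g.eval (r n)) := by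
      rw [WithTop.coe_add]
      exact WithTop.add_lt_add_of_le_of_lt WithTop.coe_ne_top (w.le_ord_eval hb (hr n)) (hgr n)

include hcauchy in
lemma le_ord_eval_sub_eval_of_le {P : M[X]} {b : ℤ}
    (hb : ∀ i, (b : WithTop ℤ) ≤ w.ord (P.coeff i)) {n m : ℕ} (hnm : n ≤ m) :
    ((b + n : ℤ) : WithTop ℤ) ≤ w.ord (P.eval (r m) - P.eval (r n)) := by
  refine le_trans ?_ (w.le_ord_eval_sub_eval hb (hr m) (hr n))
  rw [WithTop.coe_add]
  exact add_le_add le_rfl (hcauchy n m hnm).le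

include hgr hcauchy in
/-- Bézout `A g + B P = 1` bounds `ord P(rₙ)` from above, and then the Cauchy property
freezes it. -/
lemma exists_eventually_ord_eval_eq {P : M[X]} (hP : IsCoprime g P) :
    ∃ V : ℤ, ∀ᶠ n in atTop, w.ord (P.eval (r n)) = V := by
  obtain ⟨A, B, hAB⟩ := hP
  obtain ⟨bB, hbB⟩ := w.exists_le_ord_coeff B
  obtain ⟨bP, hbP⟩ := w.exists_le_ord_coeff P
  have hupper : ∀ᶠ n in atTop, w.ord (P.eval (r n)) ≤ ((-bB : ℤ) : WithTop ℤ) := by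
    filter_upwards [w.eventually_lt_ord_eval_mul hr hgr A 0] with n hn
    by_contra! hlt
    have hBP : 0 < w.ord (B.eval (r n) * P.eval (r n)) := by
      rw [w.ord_mul, ← WithTop.coe_zero, ← add_neg_cancel bB, WithTop.coe_add]
      exact WithTop.add_lt_add_of_le_of_lt WithTop.coe_ne_top (w.le_ord_eval hbB (hr n)) hlt
    have h1 := w.ord_add _ _ |>.trans_lt' (lt_min hn hBP)
    rw [← eval_mul, ← eval_mul, ← eval_add, hAB, eval_one, w.ord_one] at h1
    exact h1.false
  obtain ⟨n₀, hn₀, hn₀b⟩ := (hupper.and (eventually_ge_atTop (-bB - bP + 1).toNat)).exists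
  obtain ⟨V, hV⟩ := w.exists_ord_eq_coe (x := P.eval (r n₀)) <| by
    rintro h
    rw [h, w.ord_zero] at hn₀
    exact WithTop.coe_ne_top (top_le_iff.mp hn₀)
  refine ⟨V, w.eventually_ord_eq_of_lt_ord_sub (.of_forall fun _ => hV) ?_⟩
  filter_upwards [eventually_ge_atTop n₀] with n hn
  refine lt_of_lt_of_le ?_ (w.le_ord_eval_sub_eval_of_le hr hcauchy hbP hn)
  rw [hV] at hn₀
  exact hn₀.trans_lt (WithTop.coe_lt_coe.mpr (by omega))

include hgr in
lemma eventually_ord_eval_modByMonicHom_mul (hg : g.Monic) {z z' : AdjoinRoot g} {V V' : ℤ}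
    (hz : ∀ᶠ n in atTop, w.ord ((modByMonicHom hg z).eval (r n)) = V)
    (hz' : ∀ᶠ n in atTop, w.ord ((modByMonicHom hg z').eval (r n)) = V') :
    ∀ᶠ n in atTop,
      w.ord ((modByMonicHom hg (z * z')).eval (r n)) = ((V + V' : ℤ) : WithTop ℤ) := by
  obtain ⟨S, hS⟩ := dvd_modByMonicHom_mul_sub hg z z'
  refine w.eventually_ord_eq_of_lt_ord_sub
    (x := fun n => (modByMonicHom hg z).eval (r n) * (modByMonicHom hg z').eval (r n)) ?_ ?_
  · filter_upwards [hz, hz'] with n hn hn'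
    rw [w.ord_mul, hn, hn', WithTop.coe_add]
  · filter_upwards [w.eventually_lt_ord_eval_mul hr hgr S (V + V')] with n hn
    rwa [← eval_mul, ← eval_sub, hS, eval_mul, mul_comm]

include hgr hcauchy in
lemma exists_eventually_ord_eval_modByMonicHom_eq (hg : g.Monic) (hirr : Irreducible g)
    (z : AdjoinRoot g) : ∃ V : WithTop ℤ, (z ≠ 0 → V ≠ ⊤) ∧
      ∀ᶠ n in atTop, w.ord ((modByMonicHom hg z).eval (r n)) = V := by
  by_cases hz : z = 0
  · exact ⟨⊤, fun h => (h hz).elim, .of_forall fun n => by simp [hz, w.ord_zero]⟩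
  · obtain ⟨V, hV⟩ := w.exists_eventually_ord_eval_eq hr hgr hcauchy
      (isCoprime_modByMonicHom hg hirr hz)
    exact ⟨V, fun _ => WithTop.coe_ne_top, hV⟩

include hgr hcauchy in
/-- `w'(z)` is the eventual value of `w (f_z(rₙ))`, `f_z` the remainder representative of `z`:
the order of `f_z(ρ)` for the root `ρ = lim rₙ` of `g` in the completion of `M`. -/
theorem exists_isDenseExtension_adjoinRoot (hg : g.Monic) [hirr : Fact (Irreducible g)] :
    ∃ w' : FFPrime (AdjoinRoot g), w'.IsDenseExtension w (algebraMap M (AdjoinRoot g)) := by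
  set rep := modByMonicHom hg
  have hdeg := degree_pos_of_irreducible hirr.out
  choose V hV_ne_top hV using
    w.exists_eventually_ord_eval_modByMonicHom_eq hr hgr hcauchy hg hirr.out
  have hV_eq {z : AdjoinRoot g} {U : WithTop ℤ}
      (h : ∀ᶠ n in atTop, w.ord ((rep z).eval (r n)) = U) : V z = U :=
    let ⟨_, h₁, h₂⟩ := ((hV z).and h).exists
    h₁.symm.trans h₂
  have hV_zero : V 0 = ⊤ := hV_eq (.of_forall fun n => by simp [w.ord_zero])
  have hV_map (c : M) : V (algebraMap M _ c) = w.ord c :=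
    hV_eq (.of_forall fun n => by rw [modByMonicHom_algebraMap hg hdeg, eval_C])
  have hV_mul (z z' : AdjoinRoot g) : V (z * z') = V z + V z' := by
    by_cases hz : z = 0
    · rw [hz, zero_mul, hV_zero, top_add]
    by_cases hz' : z' = 0
    · rw [hz', mul_zero, hV_zero, add_top]
    obtain ⟨v, hv⟩ := WithTop.ne_top_iff_exists.mp (hV_ne_top z hz)
    obtain ⟨v', hv'⟩ := WithTop.ne_top_iff_exists.mp (hV_ne_top z' hz')
    rw [← hv, ← hv', ← WithTop.coe_add]
    exact hV_eq (w.eventually_ord_eval_modByMonicHom_mul hr hgr hg (hv ▸ hV z) (hv' ▸ hV z'))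
  have hV_add (z z' : AdjoinRoot g) : min (V z) (V z') ≤ V (z + z') := by
    obtain ⟨n, hn, hn', hn''⟩ := ((hV z).and ((hV z').and (hV (z + z')))).exists
    rw [← hn, ← hn', ← hn'', map_add, eval_add]
    exact w.ord_add _ _
  refine ⟨⟨V, hV_zero, hV_ne_top, by simpa [w.ord_one] using hV_map 1, hV_mul, hV_add,
    fun n => (w.ord_surj n).elim fun c hc => ⟨_, (hV_map c).trans hc⟩⟩,
    ⟨hV_map, fun z N => ?_⟩⟩
  obtain ⟨b, hb⟩ := w.exists_le_ord_coeff (rep z)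
  refine ⟨(rep z).eval (r (N - b + 1).toNat), ?_⟩
  obtain ⟨n, hn, hn₀⟩ := ((hV (z - algebraMap M _ ((rep z).eval (r (N - b + 1).toNat)))).and
    (eventually_ge_atTop (N - b + 1).toNat)).exists
  change (N : WithTop ℤ) < V _
  rw [← hn, map_sub, modByMonicHom_algebraMap hg hdeg, eval_sub, eval_C]
  exact lt_of_lt_of_le (WithTop.coe_lt_coe.mpr (by omega))
    (w.le_ord_eval_sub_eval_of_le hr hcauchy hb hn₀)

end ApproximateRoots

/-! ### The Gauss valuation of an inert extension -/

section Inert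

variable {g : M[X]} (hg : g.Monic)

lemma gaussOrd_modByMonicHom_algebraMap_mul (c : M) (z : AdjoinRoot g) :
    w.gaussOrd (modByMonicHom hg (algebraMap M _ c * z)) =
      w.ord c + w.gaussOrd (modByMonicHom hg z) := by
  rw [← Algebra.smul_def, map_smul, smul_eq_C_mul, gaussOrd_C_mul]

lemma exists_eq_algebraMap_mul_gaussOrd_eq_zero {z : AdjoinRoot g} (hz : z ≠ 0) :
    ∃ c : M, ∃ z₀ : AdjoinRoot g, z = algebraMap M _ c * z₀ ∧
      w.gaussOrd (modByMonicHom hg z₀) = 0 ∧ w.gaussOrd (modByMonicHom hg z) = w.ord c := by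
  obtain ⟨k, hk⟩ := WithTop.ne_top_iff_exists.mp <|
    mt w.gaussOrd_eq_top_iff.mp (mt (modByMonicHom_eq_zero_iff hg).mp hz)
  obtain ⟨c, hc⟩ := w.ord_surj k
  have hc0 : c ≠ 0 := fun h => by simp [h, w.ord_zero] at hc
  refine ⟨c, algebraMap M _ c⁻¹ * z, ?_, ?_, hk.symm.trans hc.symm⟩
  · rw [← mul_assoc, ← map_mul, mul_inv_cancel₀ hc0, map_one, one_mul]
  · rw [w.gaussOrd_modByMonicHom_algebraMap_mul, w.ord_inv, hc, ← hk,
      ← WithTop.LinearOrderedAddCommGroup.coe_neg, ← WithTop.coe_add, neg_add_cancel,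
      WithTop.coe_zero]

variable {G : w.valuationSubring[X]} (hG : G.Monic) (hGg : G.map w.valuationSubring.subtype = g)
  (hGres : Irreducible (G.map (IsLocalRing.residue w.valuationSubring)))
include hG hGg hGres

omit hGres in
lemma modByMonicHom_mul_eq_map (F F' : w.valuationSubring[X]) (z z' : AdjoinRoot g)
    (hF : F.map w.valuationSubring.subtype = modByMonicHom hg z)
    (hF' : F'.map w.valuationSubring.subtype = modByMonicHom hg z') :
    modByMonicHom hg (z * z') = (F * F' %ₘ G).map w.valuationSubring.subtype := by
  rw [map_modByMonic _ hG, Polynomial.map_mul, hF, hF', hGg, ← modByMonicHom_mk hg,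
    (AdjoinRoot.mk g).map_mul, mk_leftInverse hg, mk_leftInverse hg]

omit hGres in
lemma not_dvd_map_residue (F : w.valuationSubring[X]) (z : AdjoinRoot g)
    (hF : F.map w.valuationSubring.subtype = modByMonicHom hg z)
    (hz : w.gaussOrd (modByMonicHom hg z) = 0) :
    ¬ G.map (IsLocalRing.residue w.valuationSubring) ∣
      F.map (IsLocalRing.residue w.valuationSubring) := by
  intro hdvd
  have hne : F.map (IsLocalRing.residue w.valuationSubring) ≠ 0 := by
    rw [Ne, w.map_residue_eq_zero_iff, hF, hz]
    exact lt_irrefl 0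
  refine (degree_le_of_dvd hdvd hne).not_gt ?_
  calc (F.map (IsLocalRing.residue w.valuationSubring)).degree ≤ F.degree := degree_map_le
    _ = (modByMonicHom hg z).degree := by
      rw [← hF, degree_map_eq_of_injective Subtype.val_injective]
    _ < g.degree := degree_modByMonicHom_lt hg z
    _ = (G.map (IsLocalRing.residue w.valuationSubring)).degree := by
      rw [← hGg, hG.degree_map, hG.degree_map]

/-- Modulo `w`, `z` and `z'` become nonzero elements of the field `κ[X]/(Ḡ)`, so `z * z'` does
too. -/
lemma gaussOrd_mul_eq_zero {z z' : AdjoinRoot g} (hz : w.gaussOrd (modByMonicHom hg z) = 0)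
    (hz' : w.gaussOrd (modByMonicHom hg z') = 0) : w.gaussOrd (modByMonicHom hg (z * z')) = 0 := by
  obtain ⟨F, hF⟩ := w.exists_map_eq_of_ord_coeff_nonneg (w.le_gaussOrd_iff.mp hz.ge)
  obtain ⟨F', hF'⟩ := w.exists_map_eq_of_ord_coeff_nonneg (w.le_gaussOrd_iff.mp hz'.ge)
  rw [w.modByMonicHom_mul_eq_map hg hG hGg F F' z z' hF hF']
  refine le_antisymm (not_lt.mp fun hpos => ?_) (w.gaussOrd_map_subtype_nonneg _)
  rw [← w.map_residue_eq_zero_iff, map_modByMonic _ hG, Polynomial.map_mul,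
    modByMonic_eq_zero_iff_dvd (hG.map _)] at hpos
  rcases hGres.prime.dvd_or_dvd hpos with h | h
  · exact w.not_dvd_map_residue hg hG hGg F z hF hz h
  · exact w.not_dvd_map_residue hg hG hGg F' z' hF' hz' h

lemma gaussOrd_modByMonicHom_mul (z z' : AdjoinRoot g) :
    w.gaussOrd (modByMonicHom hg (z * z')) =
      w.gaussOrd (modByMonicHom hg z) + w.gaussOrd (modByMonicHom hg z') := by
  by_cases hz : z = 0
  · simp [hz, gaussOrd]
  by_cases hz' : z' = 0
  · simp [hz', gaussOrd]
  obtain ⟨c, z₀, rfl, hz₀, hc⟩ := w.exists_eq_algebraMap_mul_gaussOrd_eq_zero hg hz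
  obtain ⟨c', z₀', rfl, hz₀', hc'⟩ := w.exists_eq_algebraMap_mul_gaussOrd_eq_zero hg hz'
  rw [hc, hc', mul_mul_mul_comm, ← map_mul, w.gaussOrd_modByMonicHom_algebraMap_mul,
    w.gaussOrd_mul_eq_zero hg hG hGg hGres hz₀ hz₀', add_zero, w.ord_mul]

lemma gaussOrd_modByMonicHom_prod {ι : Type*} (s : Finset ι) (f : ι → AdjoinRoot g) :
    w.gaussOrd (modByMonicHom hg (∏ i ∈ s, f i)) =
      ∑ i ∈ s, w.gaussOrd (modByMonicHom hg (f i)) := by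
  classical
  induction s using Finset.induction with
  | empty =>
    have hdeg : 0 < g.degree := by
      rw [← hGg, hG.degree_map, ← hG.degree_map (IsLocalRing.residue _)]
      exact degree_pos_of_irreducible hGres
    rw [Finset.prod_empty, ← map_one (algebraMap M _), modByMonicHom_algebraMap hg hdeg,
      gaussOrd_C, w.ord_one, Finset.sum_empty]
  | insert i s hi ih =>
    rw [Finset.prod_insert hi, Finset.sum_insert hi,
      w.gaussOrd_modByMonicHom_mul hg hG hGg hGres, ih]

end Inert

/-- `σ` multiplies the `i`-th coefficient of the remainder representative by `ηⁱ`, `η` a root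
of unity. -/
lemma gaussOrd_modByMonicHom_aut {q : ℕ} [NeZero q] {a : M} [Fact (Irreducible (X ^ q - C a))]
    (hζ : (primitiveRoots q M).Nonempty)
    (σ : AdjoinRoot (X ^ q - C a) ≃ₐ[M] AdjoinRoot (X ^ q - C a))
    (z : AdjoinRoot (X ^ q - C a)) :
    w.gaussOrd (modByMonicHom (monic_X_pow_sub_C a (NeZero.ne q)) (σ z)) =
      w.gaussOrd (modByMonicHom (monic_X_pow_sub_C a (NeZero.ne q)) z) := by
  set hg := monic_X_pow_sub_C a (NeZero.ne q)
  obtain ⟨η, rfl⟩ :=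
    (autAdjoinRootXPowSubCEquiv hζ (Fact.out : Irreducible (X ^ q - C a))).surjective σ
  have hf : (modByMonicHom hg z).degree < q :=
    degree_X_pow_sub_C (Nat.pos_of_neZero q) a ▸ degree_modByMonicHom_lt hg z
  set f := modByMonicHom hg z
  have hη : w.ord ((η : Mˣ) : M) = 0 := w.ord_eq_zero_of_pow_eq_one (NeZero.ne q) <| by
    rw [← Units.val_pow_eq_pow_val, (mem_rootsOfUnity _ _).mp η.2, Units.val_one]
  have hσz : autAdjoinRootXPowSubCEquiv hζ Fact.out η z =
      AdjoinRoot.mk _ (f.comp (C ((η : Mˣ) : M) * X)) := by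
    rw [← mk_leftInverse hg z, ← aeval_eq, ← aeval_algHom_apply,
      autAdjoinRootXPowSubCEquiv_root, ← aeval_eq, aeval_comp, map_mul, aeval_C, aeval_X,
      Algebra.smul_def]
  rw [hσz, modByMonicHom_mk, (modByMonic_eq_self_iff hg).mpr]
  · exact w.gaussOrd_congr fun i => by
      rw [comp_C_mul_X_coeff, w.ord_mul, w.ord_pow, hη, nsmul_zero, add_zero]
  · rw [degree_X_pow_sub_C (Nat.pos_of_neZero q), degree_lt_iff_coeff_zero]
    rw [degree_lt_iff_coeff_zero] at hf
    intro m hm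
    rw [comp_C_mul_X_coeff, hf m hm, zero_mul]

lemma irreducible_map_residue_X_pow_sub_C {q : ℕ} (hq : q.Prime) {a : M} (ha : 0 ≤ w.ord a)
    (hres : ∀ z : M, ¬ 0 < w.ord (a - z ^ q)) :
    Irreducible ((X ^ q - C ⟨a, ha⟩ : w.valuationSubring[X]).map
      (IsLocalRing.residue w.valuationSubring)) := by
  rw [Polynomial.map_sub, Polynomial.map_pow, map_X, map_C]
  refine X_pow_sub_C_irreducible_of_prime hq fun b hb => ?_
  obtain ⟨c, rfl⟩ := IsLocalRing.residue_surjective b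
  rw [← map_pow, ← sub_eq_zero, ← map_sub, w.residue_eq_zero_iff] at hb
  exact hres c (by rwa [w.ord_sub_comm])

/-- `N z = ∏ σ z`, and the Gauss order is multiplicative and Galois invariant. -/
theorem ordDvd_norm_adjoinRoot {q : ℕ} (hq : q.Prime) (hζ : (primitiveRoots q M).Nonempty)
    {a : M} (ha : w.ord a = 0) (hres : ∀ z : M, ¬ 0 < w.ord (a - z ^ q))
    [hirr : Fact (Irreducible (X ^ q - C a))] {z : AdjoinRoot (X ^ q - C a)}
    (hz : Algebra.norm M z ≠ 0) : w.OrdDvd q (Algebra.norm M z) := by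
  have : NeZero q := ⟨hq.ne_zero⟩
  have := isSplittingField_AdjoinRoot_X_pow_sub_C hζ hirr.out
  have := IsSplittingField.finiteDimensional (AdjoinRoot (X ^ q - C a)) (X ^ q - C a)
  have := isGalois_of_isSplittingField_X_pow_sub_C hζ hirr.out (AdjoinRoot (X ^ q - C a))
  have hg := monic_X_pow_sub_C a hq.ne_zero
  obtain ⟨k, hk⟩ := WithTop.ne_top_iff_exists.mp <| mt w.gaussOrd_eq_top_iff.mp <|
    mt (modByMonicHom_eq_zero_iff hg).mp fun (h : z = 0) => hz (by rw [h, Algebra.norm_zero])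
  have hcard : Fintype.card (AdjoinRoot (X ^ q - C a) ≃ₐ[M] AdjoinRoot (X ^ q - C a)) = q := by
    rw [← Nat.card_eq_fintype_card, IsGalois.card_aut_eq_finrank,
      finrank_of_isSplittingField_X_pow_sub_C hζ hirr.out]
  refine ⟨k, ?_⟩
  rw [← gaussOrd_C, ← modByMonicHom_algebraMap hg (degree_pos_of_irreducible hirr.out),
    Algebra.norm_eq_prod_automorphisms, w.gaussOrd_modByMonicHom_prod hg
      (monic_X_pow_sub_C _ hq.ne_zero) (by simp)
      (w.irreducible_map_residue_X_pow_sub_C hq ha.ge hres),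
    Finset.sum_congr rfl fun σ _ => w.gaussOrd_modByMonicHom_aut hζ σ z, Finset.sum_const,
    Finset.card_univ, hcard, ← hk, ← WithTop.coe_nsmul, nsmul_eq_mul]

variable {M' : Type} [Field M'] [Algebra M M']

theorem ordDvd_norm_of_pow_eq {q : ℕ} (hq : q.Prime) {ζ : M} (hζ : IsPrimitiveRoot ζ q)
    {a : M} (ha : w.ord a = 0) (hres : ∀ z : M, ¬ 0 < w.ord (a - z ^ q)) {α : M'}
    (hα : α ^ q = algebraMap M M' a) (hadj : IntermediateField.adjoin M {α} = ⊤) {y : M'}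
    (hy : Algebra.norm M y ≠ 0) : w.OrdDvd q (Algebra.norm M y) := by
  have H : Irreducible (X ^ q - C a) := X_pow_sub_C_irreducible_of_prime hq fun b hb =>
    hres b (by simp [hb, w.ord_zero])
  have := Fact.mk H
  obtain ⟨Ψ⟩ :=
    nonempty_algEquiv_adjoinRoot (monic_X_pow_sub_C a hq.ne_zero) H (by simp [hα]) hadj
  rw [← Ψ.apply_symm_apply y, Algebra.norm_eq_of_algEquiv] at hy ⊢
  exact w.ordDvd_norm_adjoinRoot hq ⟨ζ, (mem_primitiveRoots hq.pos).mpr hζ⟩ ha hres hy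

lemma ord_coeff_X_pow_sub_C_nonneg {q : ℕ} {u : M} (hu : 0 ≤ w.ord u) (i : ℕ) :
    0 ≤ w.ord ((X ^ q - C u).coeff i) := by
  rw [coeff_sub, coeff_X_pow, coeff_C]
  refine w.le_ord_sub ?_ ?_ <;> split_ifs <;> simp [w.ord_one, w.ord_zero, hu]

/-- Newton's method puts a `q`-th root of `u` in the completion of `M`; if `X^q - u` is
reducible, then `M' = M`. -/
theorem exists_isDenseExtension_of_pow_eq {q : ℕ} (hq : q.Prime) {ζ : M}
    (hζ : IsPrimitiveRoot ζ q) (hqw : w.ord (q : M) = 0) {u : M} (hu : 0 < w.ord (u - 1)) {α : M'}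
    (hα : α ^ q = algebraMap M M' u) (hadj : IntermediateField.adjoin M {α} = ⊤) :
    ∃ w' : FFPrime M', w'.IsDenseExtension w (algebraMap M M') := by
  by_cases H : Irreducible (X ^ q - C u)
  · have := Fact.mk H
    have hf := w.ord_coeff_X_pow_sub_C_nonneg (q := q) (w.ord_eq_zero_of_ord_sub_one_pos hu).ge
    obtain ⟨r, hr, hfr, hcauchy⟩ := w.exists_newton_seq hf (x₀ := 1) (by rw [w.ord_one])
      (by simpa [derivative_X_pow] using hqw) (by simpa [w.ord_sub_comm 1 u] using hu)
    obtain ⟨w', D⟩ := w.exists_isDenseExtension_adjoinRoot hr (fun n => by simpa using hfr n)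
      hcauchy (monic_X_pow_sub_C u hq.ne_zero)
    obtain ⟨Ψ⟩ := nonempty_algEquiv_adjoinRoot (monic_X_pow_sub_C u hq.ne_zero) H
      (by simp [hα]) hadj
    exact ⟨_, D.comap_algEquiv Ψ⟩
  · obtain ⟨b, rfl⟩ : ∃ b, b ^ q = u := by
      by_contra! h
      exact H (X_pow_sub_C_irreducible_of_prime hq h)
    have : NeZero q := ⟨hq.ne_zero⟩
    have hb : algebraMap M M' b ≠ 0 := by
      rintro h
      rw [(algebraMap M M').injective.eq_iff' (map_zero _)] at h
      simp [h, zero_pow hq.ne_zero, w.ord_neg, w.ord_one] at hu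
    obtain ⟨i, -, hi⟩ := (hζ.map_of_injective (algebraMap M M').injective).eq_pow_of_pow_eq_one
      (ξ := α / algebraMap M M' b) (by rw [div_pow, hα, map_pow, div_self (pow_ne_zero _ hb)])
    have hα_mem : α ∈ (⊥ : IntermediateField M M') :=
      IntermediateField.mem_bot.mpr
        ⟨ζ ^ i * b, by rw [map_mul, map_pow, hi, div_mul_cancel₀ _ hb]⟩
    have hsurj : Function.Surjective (algebraMap M M') := fun z =>
      IntermediateField.mem_bot.mp <| by
        rw [← IntermediateField.adjoin_simple_eq_bot_iff.mpr hα_mem, hadj]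
        trivial
    exact ⟨_, (IsDenseExtension.refl w).comap_algEquiv
      (AlgEquiv.ofBijective (Algebra.ofId M M') ⟨(algebraMap M M').injective, hsurj⟩)⟩

variable {w} in
theorem IsDenseExtension.exists_of_pow_eq_one_add {K : Type} [Field K] {v : FFPrime K}
    {φ : K →+* M} (D : w.IsDenseExtension v φ) {q : ℕ} (hq : q.Prime) {ζ : K}
    (hζ : IsPrimitiveRoot ζ q) (hqv : v.ord (q : K) = 0) {t : K} (ht : 0 < v.ord t) {α : M'}
    (hα : α ^ q = algebraMap M M' (φ (1 + t))) (hadj : IntermediateField.adjoin M {α} = ⊤) :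
    ∃ w' : FFPrime M', w'.IsDenseExtension v ((algebraMap M M').comp φ) := by
  obtain ⟨w', D'⟩ := w.exists_isDenseExtension_of_pow_eq hq (hζ.map_of_injective φ.injective)
    (by rw [← map_natCast φ, D.ord_map, hqv])
    (by rwa [← map_one φ, ← map_sub, D.ord_map, add_sub_cancel_left]) hα hadj
  exact ⟨w', D'.trans D⟩

variable {w} in
theorem IsDenseExtension.ordDvd_of_norm_eq {K : Type} [Field K] {v : FFPrime K} {φ : K →+* M}
    (D : w.IsDenseExtension v φ) {q : ℕ} (hq : q.Prime) {ζ : K} (hζ : IsPrimitiveRoot ζ q)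
    {a : K} (ha : v.ord a = 0) (hres : ∀ z : K, ¬ 0 < v.ord (a - z ^ q)) {α : M'}
    (hα : α ^ q = algebraMap M M' (φ a)) (hadj : IntermediateField.adjoin M {α} = ⊤) {c : K}
    (hc : c ≠ 0) {y : M'} (hy : Algebra.norm M y = φ c) : v.OrdDvd q c := by
  obtain ⟨n, hn⟩ := w.ordDvd_norm_of_pow_eq hq (hζ.map_of_injective φ.injective)
    ((D.ord_map a).trans ha) (D.not_lt_ord_sub_pow hq.pos ha hres) hα hadj
    (hy ▸ (_root_.map_ne_zero φ).mpr hc)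
  exact ⟨n, (D.ord_map c).symm.trans (hy ▸ hn)⟩

end FFPrime

theorem statement17_general (p q : ℕ) [Fact p.Prime] (hq : q.Prime) (hqp : q ≠ p)
    (K : Type) [Field K] [Algebra (RatFunc (ZMod p)) K]
    (ζ : K) (hζ : IsPrimitiveRoot ζ q)
    (a b x : K)
    (v : FFPrime K)
    (h1 : v.ord b < 0) (h1' : ¬ v.OrdDvd q b)
    (h2 : v.ord a = 0) (h2' : ¬ ∃ u : K, 0 < v.ord (a - u ^ q))
    (h3 : ((q : ℤ) : WithTop ℤ) * v.ord x < (((q : ℤ) - 1 : ℤ) : WithTop ℤ) * v.ord b) :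
    NormTower4Unsolvable q K a b x := by
  intro M₁ _ _ α₁ hα₁ hadj₁ M₃ _ _ α₃ hα₃ hadj₃ M₄ _ _ α₄ hα₄ hadj₄ M₅ _ _ α₅ hα₅ hadj₅
    ⟨y, hy⟩
  have hqv : v.ord (q : K) = 0 := v.ord_natCast_eq_zero
    ((algebraMap (RatFunc (ZMod p)) K).comp (algebraMap (ZMod p) (RatFunc (ZMod p))))
    fun h => hqp ((Nat.prime_dvd_prime_iff_eq Fact.out hq).mp h).symm
  obtain ⟨hx, hlt⟩ := v.ord_neg_and_ord_mul_pow_lt hq.pos h1 h3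
  have hbx : v.ord (b * x ^ q) < 0 := hlt.trans_le (min_le_right _ _)
  have hc : v.ord (b * x ^ q + b ^ q) = v.ord (b * x ^ q) :=
    v.ord_add_eq_of_lt (hlt.trans_le (min_le_left _ _))
  obtain ⟨w₁, D₁⟩ := (FFPrime.IsDenseExtension.refl v).exists_of_pow_eq_one_add hq hζ hqv
    (v.ord_inv_pos (hc ▸ hbx)) hα₁ hadj₁
  obtain ⟨w₃, D₃⟩ :=
    D₁.exists_of_pow_eq_one_add hq hζ hqv (v.ord_inv_pos hx) hα₃ hadj₃
  obtain ⟨w₄, D₄⟩ := D₃.exists_of_pow_eq_one_add hq hζ hqv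
    (v.ord_mul_pos (v.ord_add_inv_nonneg h2) (v.ord_inv_pos hx)) hα₄ hadj₄
  have hc₀ : b * x ^ q + b ^ q ≠ 0 := fun h => by
    rw [h, v.ord_zero] at hc
    exact not_top_lt (hc ▸ hbx)
  obtain ⟨n, hn⟩ :=
    D₄.ordDvd_of_norm_eq hq hζ h2 (fun u hu => h2' ⟨u, hu⟩) hα₅ hadj₅ hc₀ hy
  exact h1' (v.ordDvd_of_ordDvd_mul_pow (fun h => by simp [h, v.ord_zero] at hx) ⟨n, hc ▸ hn⟩)

/-- If `ord_𝔭 b < 0` and `ord_𝔭 b ≢ 0 mod q`, `a` is a unit at `𝔭`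
whose residue is not a `q`-th power, and `ord_𝔭 x < ((q-1)/q)·ord_𝔭 b`, then the norm
equation `N_{L₄(a^{1/q})/L₄}(y) = b x^q + b^q` has no solution. -/
theorem statement17 (p q : ℕ) [Fact p.Prime] (hq : q.Prime) (hqp : q ≠ p)
    (K : Type) [Field K] [Algebra (RatFunc (ZMod p)) K]
    [FiniteDimensional (RatFunc (ZMod p)) K]
    (ζ : K) (hζ : IsPrimitiveRoot ζ q)
    (a b x : K) (ha : a ≠ 0) (hb : b ≠ 0) (hx : x ≠ 0)
    (v : FFPrime K)
    (h1 : v.ord b < 0) (h1' : ¬ v.OrdDvd q b)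
    (h2 : v.ord a = 0) (h2' : ¬ ∃ u : K, 0 < v.ord (a - u ^ q))
    (h3 : ((q : ℤ) : WithTop ℤ) * v.ord x < (((q : ℤ) - 1 : ℤ) : WithTop ℤ) * v.ord b) :
    NormTower4Unsolvable q K a b x :=
  statement17_general p q hq hqp K ζ hζ a b x v h1 h1' h2 h2' h3
end
end
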